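/- Let k be a field, let (L, K, M) be a field correspondence over k, let Ω be an algebraically closed field extension of k of transcendence degree 1, and fix a k-algebra embedding PQ : M → Ω with restrictions P = PQ|_L and Q = PQ|_K. Let G_gen be the connected component of the edge PQ in the full generic graph, and let E_∞ ⊆ Ω be the subfield generated by the images of all vertices and edges of G_gen. Let G_P = Gal(E_∞ / P(L)) and G_Q = Gal(E_∞ / Q(K)), consisting of k-algebra automorphisms of E_∞ fixing P(L), respectively Q(K), pointwise, and let A^{PQ} be the subgroup of Aut_k(E_∞) generated by G_P and G_Q. Then every edge e of G_gen has image contained in E_∞, post-composition by elements of A^{PQ} maps edges of G_gen to edges of G_gen, and for any two edges e, e' of G_gen there exists σ ∈ A^{PQ} with σ ∘ e = e'. In particular A^{PQ} acts transitively on the edges of G_gen, preserving the two-coloring of the vertices. -/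

import Mathlib

/-!
Generators of `A^{PQ}` fix a vertex of `PQ`, so they move `PQ` to an adjacent edge and hence map
`G_gen` onto itself. For transitivity, walk along a path from `PQ`: if `σ ∘ PQ = b` and `c` shares
a vertex, say its `L`-vertex, with `b`, then `σ⁻¹ ∘ c` agrees with `PQ` on `L`. Since `Ω` has
transcendence degree one, it is algebraic over `P(L)`, so `σ⁻¹ ∘ c` comes from an embedding
`τ : Ω → Ω` fixing `P(L)`. Post-composition by `τ` preserves `G_gen`, so `τ` maps `E_∞` into
itself, and onto itself because `E_∞` is algebraic over `P(L)`; then `σ τ ∘ PQ = c`.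
-/

/-- A field extension `F/k` has transcendence degree one iff some single element
forms a transcendence basis of `F` over `k`. -/
def HasTrdegOne (k F : Type*) [Field k] [Field F] [Algebra k F] : Prop :=
  ∃ x : F, IsTranscendenceBasis k (fun _ : Unit => x)

section GenericGraph

variable {k M : Type*} [Field k] [Field M] [Algebra k M]
  (L K : IntermediateField k M)
  {Ω : Type*} [Field Ω] [Algebra k Ω]

/-- Two edges (that is, `k`-algebra homomorphisms `M → Ω`) of the full generic graph are
incident to a common vertex: they have the same restriction to `L` (a common blue vertex)
or the same restriction to `K` (a common red vertex). -/
def EdgeStep (e e' : M →ₐ[k] Ω) : Prop :=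
  e.comp L.val = e'.comp L.val ∨ e.comp K.val = e'.comp K.val

/-- The edge `e` lies in the connected component `G_gen` of the distinguished edge `PQ`
of the full generic graph. -/
def InGenericComponent (PQ e : M →ₐ[k] Ω) : Prop :=
  Relation.ReflTransGen (EdgeStep L K) PQ e

/-- The subfield `E_∞ = E_{G_gen}` of `Ω` generated by the images of all vertices and
edges of the connected component `G_gen` of `PQ`. -/
noncomputable def componentField (PQ : M →ₐ[k] Ω) : IntermediateField k Ω :=
  (⨆ e : {e : M →ₐ[k] Ω // InGenericComponent L K PQ e}, (e.1).fieldRange) ⊔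
  (⨆ e : {e : M →ₐ[k] Ω // InGenericComponent L K PQ e}, ((e.1).comp L.val).fieldRange) ⊔
  (⨆ e : {e : M →ₐ[k] Ω // InGenericComponent L K PQ e}, ((e.1).comp K.val).fieldRange)

/-- `G_P = Gal(E_∞ / P(L))`: the subgroup of `k`-algebra automorphisms of `E_∞` fixing
the image `P(L)` pointwise. -/
noncomputable def galP (PQ : M →ₐ[k] Ω) :
    Subgroup (componentField L K PQ ≃ₐ[k] componentField L K PQ) :=
  fixingSubgroup (componentField L K PQ ≃ₐ[k] componentField L K PQ)
    {z : componentField L K PQ | (z : Ω) ∈ (PQ.comp L.val).fieldRange}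

/-- `G_Q = Gal(E_∞ / Q(K))`: the subgroup of `k`-algebra automorphisms of `E_∞` fixing
the image `Q(K)` pointwise. -/
noncomputable def galQ (PQ : M →ₐ[k] Ω) :
    Subgroup (componentField L K PQ ≃ₐ[k] componentField L K PQ) :=
  fixingSubgroup (componentField L K PQ ≃ₐ[k] componentField L K PQ)
    {z : componentField L K PQ | (z : Ω) ∈ (PQ.comp K.val).fieldRange}

/-- `A^{PQ}`: the subgroup of `Aut_k(E_∞)` generated by `G_P` and `G_Q`. -/
noncomputable def APQ (PQ : M →ₐ[k] Ω) :
    Subgroup (componentField L K PQ ≃ₐ[k] componentField L K PQ) :=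
  galP L K PQ ⊔ galQ L K PQ

end GenericGraph

section FieldTheory

variable {k Ω : Type*} [Field k] [Field Ω] [Algebra k Ω]

theorem HasTrdegOne.isTranscendenceBasis (h : HasTrdegOne k Ω) {u : Ω}
    (hu : Transcendental k u) : IsTranscendenceBasis k (fun _ : Unit => u) := by
  obtain ⟨y, hy⟩ := h
  exact (algebraicIndependent_unique_type_iff.2 hu).isTranscendenceBasis_of_lift_trdeg_le_of_finite
    hy.lift_cardinalMk_eq_trdeg.ge

theorem HasTrdegOne.isAlgebraic_of_transcendental_mem (h : HasTrdegOne k Ω)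
    {F : IntermediateField k Ω} {u : Ω} (huF : u ∈ F) (hu : Transcendental k u) :
    Algebra.IsAlgebraic F Ω := by
  have := (h.isTranscendenceBasis hu).isAlgebraic_field
  have hle : IntermediateField.adjoin k (Set.range fun _ : Unit => u) ≤ F := by
    simpa [IntermediateField.adjoin_le_iff] using huF
  exact ⟨fun w => IsAlgebraic.tower_top_of_subalgebra_le (R := k)
    (A := (IntermediateField.adjoin k (Set.range fun _ : Unit => u)).toSubalgebra)
    (B := F.toSubalgebra) hle (Algebra.IsAlgebraic.isAlgebraic w)⟩

theorem HasTrdegOne.exists_transcendental_mem (h : HasTrdegOne k Ω)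
    (J : IntermediateField k Ω) [FiniteDimensional J Ω] : ∃ u ∈ J, Transcendental k u := by
  obtain ⟨x, hx⟩ := h
  by_contra! hJ
  have : Algebra.IsAlgebraic k J :=
    ⟨fun u => IntermediateField.isAlgebraic_iff.2 (not_not.1 (hJ u u.2))⟩
  have : Algebra.IsAlgebraic k Ω := Algebra.IsAlgebraic.trans k J Ω
  exact algebraicIndependent_unique_type_iff.1 hx.1 (Algebra.IsAlgebraic.isAlgebraic x)

theorem exists_algHom_comp_eq [IsAlgClosed Ω] {M Ω' : Type*} [Field M] [Algebra k M] [Field Ω']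
    [Algebra k Ω'] (g : M →ₐ[k] Ω') (h : M →ₐ[k] Ω) [Algebra.IsAlgebraic g.fieldRange Ω'] :
    ∃ τ : Ω' →ₐ[k] Ω, τ.comp g = h := by
  let e : M ≃ₐ[k] g.fieldRange := (AlgEquiv.ofInjectiveField g).trans
    (Subalgebra.equivOfEq _ _ (AlgHom.fieldRange_toSubalgebra g).symm)
  obtain ⟨φ, hφ⟩ := IntermediateField.exists_algHom_of_splits' (F := k) (E := Ω') (K := Ω)
    (h.comp e.symm.toAlgHom)
    fun s => ⟨(Algebra.IsAlgebraic.isAlgebraic s).isIntegral, IsAlgClosed.splits _⟩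
  refine ⟨φ, AlgHom.ext fun x => ?_⟩
  have hx := AlgHom.congr_fun hφ (e x)
  simp only [AlgHom.comp_apply, AlgEquiv.coe_toAlgHom, AlgEquiv.symm_apply_apply] at hx
  exact hx

/-- An embedding fixing `F` permutes the finitely many roots in `E` of each polynomial over `F`,
so if it maps `E` into itself it maps `E` onto itself. -/
theorem IntermediateField.exists_algEquiv_of_mapsTo {F E : IntermediateField k Ω} (hFE : F ≤ E)
    [Algebra.IsAlgebraic F Ω] (τ : Ω →ₐ[k] Ω) (hτF : ∀ x ∈ F, τ x = x)
    (hτE : ∀ x ∈ E, τ x ∈ E) : ∃ σ : E ≃ₐ[k] E, ∀ z, (σ z : Ω) = τ z := by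
  let E' := IntermediateField.extendScalars hFE
  let τF : Ω →ₐ[F] Ω := { τ.toRingHom with commutes' := fun c => hτF c c.2 }
  let τE' : E' →ₐ[F] E' := (τF.comp E'.val).codRestrict E'.toSubalgebra fun z => hτE z z.2
  let τE : E →ₐ[k] E := (τ.comp E.val).codRestrict E.toSubalgebra fun z => hτE z z.2
  exact ⟨AlgEquiv.ofBijective τE (Algebra.IsAlgebraic.algHom_bijective τE'), fun z => rfl⟩

end FieldTheory

section EdgeGraph

variable {k M : Type*} [Field k] [Field M] [Algebra k M] {L K : IntermediateField k M}
  {Ω Ω' : Type*} [Field Ω] [Algebra k Ω] [Field Ω'] [Algebra k Ω']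

theorem EdgeStep.symm {e e' : M →ₐ[k] Ω} (h : EdgeStep L K e e') : EdgeStep L K e' e :=
  h.imp Eq.symm Eq.symm

theorem EdgeStep.comp (g : Ω →ₐ[k] Ω') {e e' : M →ₐ[k] Ω} (h : EdgeStep L K e e') :
    EdgeStep L K (g.comp e) (g.comp e') := by
  rcases h with h | h
  · exact Or.inl (by rw [AlgHom.comp_assoc, AlgHom.comp_assoc, h])
  · exact Or.inr (by rw [AlgHom.comp_assoc, AlgHom.comp_assoc, h])

theorem EdgeStep.of_comp {g : Ω →ₐ[k] Ω'} (hg : Function.Injective g) {e e' : M →ₐ[k] Ω}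
    (h : EdgeStep L K (g.comp e) (g.comp e')) : EdgeStep L K e e' := by
  have hcancel : ∀ J : IntermediateField k M,
      (g.comp e).comp J.val = (g.comp e').comp J.val → e.comp J.val = e'.comp J.val :=
    fun J hJ => AlgHom.ext fun x => hg (AlgHom.congr_fun hJ x)
  exact h.imp (hcancel L) (hcancel K)

variable (L K) in
theorem InGenericComponent.refl (a : M →ₐ[k] Ω) : InGenericComponent L K a a :=
  Relation.ReflTransGen.refl

theorem InGenericComponent.trans {a b e : M →ₐ[k] Ω} (hab : InGenericComponent L K a b)
    (hbe : InGenericComponent L K b e) : InGenericComponent L K a e :=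
  Relation.ReflTransGen.trans hab hbe

theorem InGenericComponent.symm {a e : M →ₐ[k] Ω} (h : InGenericComponent L K a e) :
    InGenericComponent L K e a := by
  induction h with
  | refl => exact .refl L K _
  | tail _ hstep ih => exact Relation.ReflTransGen.head hstep.symm ih

theorem InGenericComponent.comp (g : Ω →ₐ[k] Ω') {a e : M →ₐ[k] Ω}
    (h : InGenericComponent L K a e) : InGenericComponent L K (g.comp a) (g.comp e) :=
  Relation.ReflTransGen.lift (fun e : M →ₐ[k] Ω => g.comp e) (fun _ _ => EdgeStep.comp g) _ _ h

variable (L K) in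
def componentStabilizer (a : M →ₐ[k] Ω) : Subgroup (Ω ≃ₐ[k] Ω) where
  carrier := {σ | InGenericComponent L K a ((σ : Ω →ₐ[k] Ω).comp a)}
  one_mem' := .refl L K a
  mul_mem' {σ τ} hσ hτ := hσ.trans (hτ.comp (σ : Ω →ₐ[k] Ω))
  inv_mem' {σ} hσ := by
    have h := (hσ.comp ((σ⁻¹ : Ω ≃ₐ[k] Ω) : Ω →ₐ[k] Ω)).symm
    have hcancel : ((σ⁻¹ : Ω ≃ₐ[k] Ω) : Ω →ₐ[k] Ω).comp ((σ : Ω →ₐ[k] Ω).comp a) = a := by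
      ext; simp [AlgEquiv.aut_inv]
    rwa [hcancel] at h

theorem InGenericComponent.comp_of_mem_componentStabilizer {a e : M →ₐ[k] Ω}
    {σ : Ω ≃ₐ[k] Ω} (hσ : σ ∈ componentStabilizer L K a) (he : InGenericComponent L K a e) :
    InGenericComponent L K a ((σ : Ω →ₐ[k] Ω).comp e) :=
  InGenericComponent.trans hσ (he.comp _)

end EdgeGraph

section ComponentField

variable {k M : Type*} [Field k] [Field M] [Algebra k M] {L K : IntermediateField k M}
  {Ω : Type*} [Field Ω] [Algebra k Ω] {PQ : M →ₐ[k] Ω}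

local notation "E∞" => componentField L K PQ

theorem InGenericComponent.apply_mem_componentField {e : M →ₐ[k] Ω}
    (he : InGenericComponent L K PQ e) (x : M) : e x ∈ E∞ :=
  ((le_iSup (fun e : {e // InGenericComponent L K PQ e} => e.1.fieldRange) ⟨e, he⟩).trans
    (le_sup_left.trans le_sup_left)) ⟨x, rfl⟩

theorem componentField_le_comap {τ : Ω →ₐ[k] Ω} (hτ : InGenericComponent L K PQ (τ.comp PQ)) :
    E∞ ≤ (E∞).comap τ := by
  have hedge : ∀ e : {e // InGenericComponent L K PQ e}, ∀ x, τ (e.1 x) ∈ E∞ :=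
    fun e x => (hτ.trans (e.2.comp τ)).apply_mem_componentField x
  refine sup_le (sup_le ?_ ?_) ?_ <;> refine iSup_le fun e => ?_ <;> rintro _ ⟨x, rfl⟩ <;>
    exact hedge e _

noncomputable def InGenericComponent.codRestrict {e : M →ₐ[k] Ω}
    (he : InGenericComponent L K PQ e) : M →ₐ[k] E∞ :=
  e.codRestrict (E∞).toSubalgebra he.apply_mem_componentField

local notation "PQ₀" => InGenericComponent.codRestrict (InGenericComponent.refl L K PQ)

@[simp]
theorem InGenericComponent.val_comp_codRestrict {e : M →ₐ[k] Ω}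
    (he : InGenericComponent L K PQ e) : (E∞).val.comp he.codRestrict = e :=
  AlgHom.ext fun _ => rfl

theorem InGenericComponent.codRestrict_inGenericComponent {e : M →ₐ[k] Ω}
    (he : InGenericComponent L K PQ e) : InGenericComponent L K PQ₀ he.codRestrict := by
  induction he with
  | refl => exact .refl L K _
  | tail _ hstep ih =>
    exact ih.trans (.single (EdgeStep.of_comp (g := (E∞).val) Subtype.val_injective hstep))

theorem comp_val_eq_of_mem_fixingSubgroup (J : IntermediateField k M) {σ : E∞ ≃ₐ[k] E∞}
    (hσ : σ ∈ fixingSubgroup _ {z : E∞ | (z : Ω) ∈ (PQ.comp J.val).fieldRange}) :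
    ((σ : E∞ →ₐ[k] E∞).comp PQ₀).comp J.val = (PQ₀).comp J.val :=
  AlgHom.ext fun x => (mem_fixingSubgroup_iff _).1 hσ _ ⟨x, rfl⟩

theorem APQ_le_componentStabilizer : APQ L K PQ ≤ componentStabilizer L K PQ₀ :=
  sup_le (fun _ hσ => .single (Or.inl (comp_val_eq_of_mem_fixingSubgroup L hσ).symm))
    (fun _ hσ => .single (Or.inr (comp_val_eq_of_mem_fixingSubgroup K hσ).symm))

theorem exists_mem_fixingSubgroup_comp_eq [IsAlgClosed Ω] (htrΩ : HasTrdegOne k Ω)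
    {J : IntermediateField k M} {u : M} (huJ : u ∈ J) (hu : Transcendental k u) {f : M →ₐ[k] E∞}
    (hf : InGenericComponent L K PQ₀ f) (hfJ : f.comp J.val = (PQ₀).comp J.val) :
    ∃ τ ∈ fixingSubgroup (E∞ ≃ₐ[k] E∞) {z : E∞ | (z : Ω) ∈ (PQ.comp J.val).fieldRange},
      (τ : E∞ →ₐ[k] E∞).comp PQ₀ = f := by
  have hPQu : Transcendental k (PQ u) := (isAlgebraic_algHom_iff PQ PQ.injective).not.2 hu
  have : Algebra.IsAlgebraic PQ.fieldRange Ω :=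
    htrΩ.isAlgebraic_of_transcendental_mem ⟨u, rfl⟩ hPQu
  have : Algebra.IsAlgebraic (PQ.comp J.val).fieldRange Ω :=
    htrΩ.isAlgebraic_of_transcendental_mem ⟨⟨u, huJ⟩, rfl⟩ hPQu
  obtain ⟨τ, hτ⟩ := exists_algHom_comp_eq PQ ((E∞).val.comp f)
  have hτPQ : InGenericComponent L K PQ (τ.comp PQ) := by
    rw [hτ]
    simpa using hf.comp (E∞).val
  have hτJ : ∀ y ∈ (PQ.comp J.val).fieldRange, τ y = y := by
    rintro _ ⟨x, rfl⟩
    calc τ (PQ x) = f x := AlgHom.congr_fun hτ x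
      _ = PQ x := congrArg Subtype.val (AlgHom.congr_fun hfJ x)
  have hJE : (PQ.comp J.val).fieldRange ≤ E∞ := by
    rintro _ ⟨x, rfl⟩
    exact (InGenericComponent.refl L K PQ).apply_mem_componentField _
  obtain ⟨σ, hσ⟩ :=
    IntermediateField.exists_algEquiv_of_mapsTo hJE τ hτJ (componentField_le_comap hτPQ)
  refine ⟨σ, (mem_fixingSubgroup_iff _).2 fun z hz => Subtype.ext ((hσ z).trans (hτJ z hz)),
    AlgHom.ext fun x => Subtype.ext ((hσ (PQ₀ x)).trans (AlgHom.congr_fun hτ x))⟩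

theorem exists_mem_APQ_comp_eq [IsAlgClosed Ω] (htr : HasTrdegOne k M)
    [FiniteDimensional L M] [FiniteDimensional K M] (htrΩ : HasTrdegOne k Ω) {e : M →ₐ[k] E∞}
    (he : InGenericComponent L K PQ₀ e) : ∃ σ ∈ APQ L K PQ, (σ : E∞ →ₐ[k] E∞).comp PQ₀ = e := by
  induction he with
  | refl => exact ⟨1, one_mem _, rfl⟩
  | @tail b c hb hstep ih =>
    obtain ⟨σ, hσ, rfl⟩ := ih
    set f := ((σ⁻¹ : E∞ ≃ₐ[k] E∞) : E∞ →ₐ[k] E∞).comp c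
    have hf : InGenericComponent L K PQ₀ f :=
      InGenericComponent.comp_of_mem_componentStabilizer
        (APQ_le_componentStabilizer (inv_mem hσ)) (hb.tail hstep)
    have hσf : (σ : E∞ →ₐ[k] E∞).comp f = c := by
      ext x; simp [f, AlgEquiv.aut_inv]
    have hlift : ∀ J : IntermediateField k M, [FiniteDimensional J M] →
        ((σ : E∞ →ₐ[k] E∞).comp PQ₀).comp J.val = c.comp J.val →
        ∃ τ ∈ fixingSubgroup (E∞ ≃ₐ[k] E∞) {z : E∞ | (z : Ω) ∈ (PQ.comp J.val).fieldRange},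
          ((σ * τ : E∞ ≃ₐ[k] E∞) : E∞ →ₐ[k] E∞).comp PQ₀ = c := by
      intro J _ hJ
      obtain ⟨u, huJ, hu⟩ := htr.exists_transcendental_mem J
      have hfJ : f.comp J.val = (PQ₀).comp J.val := by
        ext x
        have hx : σ (PQ₀ x) = c x := AlgHom.congr_fun hJ x
        simp [f, ← hx, AlgEquiv.aut_inv]
      obtain ⟨τ, hτ, hτf⟩ := exists_mem_fixingSubgroup_comp_eq htrΩ huJ hu hf hfJ
      refine ⟨τ, hτ, ?_⟩
      rw [← hσf, ← hτf]
      rfl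
    rcases hstep with hL | hK
    · obtain ⟨τ, hτ, hστ⟩ := hlift L hL
      exact ⟨σ * τ, mul_mem hσ (Subgroup.mem_sup_left hτ), hστ⟩
    · obtain ⟨τ, hτ, hστ⟩ := hlift K hK
      exact ⟨σ * τ, mul_mem hσ (Subgroup.mem_sup_right hτ), hστ⟩

end ComponentField

theorem APQ_transitive_on_edges_general
    (k M : Type*) [Field k] [Field M] [Algebra k M]
    -- `M` is a finitely generated field extension of `k` of transcendence degree 1
    (htr : HasTrdegOne k M)
    -- the two intermediate fields `L` and `K`, with `M/L` and `M/K` finite and separable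
    (L K : IntermediateField k M)
    [FiniteDimensional L M] [FiniteDimensional K M]
    -- an algebraically closed extension `Ω` of `k` of transcendence degree 1
    (Ω : Type*) [Field Ω] [Algebra k Ω] [IsAlgClosed Ω]
    (htrΩ : HasTrdegOne k Ω)
    -- a fixed `k`-algebra embedding `PQ : M → Ω`
    (PQ : M →ₐ[k] Ω) :
    ∃ hE : ∀ e : M →ₐ[k] Ω, InGenericComponent L K PQ e →
        ∀ x : M, e x ∈ componentField L K PQ,
      -- post-composition by `σ ∈ A^{PQ}` maps edges of `G_gen` to edges of `G_gen`
      (∀ σ ∈ APQ L K PQ, ∀ (e : M →ₐ[k] Ω) (he : InGenericComponent L K PQ e),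
        ∃ e' : M →ₐ[k] Ω, InGenericComponent L K PQ e' ∧
          ∀ x : M, (σ ⟨e x, hE e he x⟩ : Ω) = e' x) ∧
      -- `A^{PQ}` acts transitively on the edges of `G_gen`
      (∀ (e e' : M →ₐ[k] Ω) (he : InGenericComponent L K PQ e),
        InGenericComponent L K PQ e' →
        ∃ σ ∈ APQ L K PQ, ∀ x : M, (σ ⟨e x, hE e he x⟩ : Ω) = e' x) := by
  refine ⟨fun e he x => he.apply_mem_componentField x, ?_, ?_⟩
  · intro σ hσ e he
    refine ⟨(componentField L K PQ).val.comp ((σ : _ →ₐ[k] _).comp he.codRestrict), ?_,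
      fun x => rfl⟩
    simpa using (InGenericComponent.comp_of_mem_componentStabilizer
      (APQ_le_componentStabilizer hσ) he.codRestrict_inGenericComponent).comp
        (componentField L K PQ).val
  · intro e e' he he'
    obtain ⟨σ, hσ, hσe⟩ := exists_mem_APQ_comp_eq htr htrΩ he.codRestrict_inGenericComponent
    obtain ⟨σ', hσ', hσe'⟩ := exists_mem_APQ_comp_eq htr htrΩ he'.codRestrict_inGenericComponent
    refine ⟨σ' * σ⁻¹, mul_mem hσ' (inv_mem hσ), fun x => ?_⟩
    change ((σ' * σ⁻¹) (he.codRestrict x) : Ω) = he'.codRestrict x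
    rw [← AlgHom.congr_fun hσe x, ← AlgHom.congr_fun hσe' x]
    simp [AlgEquiv.aut_inv]

/-- Corollary `Colored_edge_symmetric`.
Every edge of `G_gen` has image contained in `E_∞`; post-composition by any element of
`A^{PQ}` sends edges of `G_gen` to edges of `G_gen`; and `A^{PQ}` acts transitively on
the edges of `G_gen` (preserving the two-coloring of the vertices, since its elements act
by post-composition on both kinds of vertices). -/
theorem APQ_transitive_on_edges
    (k M : Type*) [Field k] [Field M] [Algebra k M]
    -- `M` is a finitely generated field extension of `k` of transcendence degree 1
    (hfg : (⊤ : IntermediateField k M).FG)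
    (htr : HasTrdegOne k M)
    -- the two intermediate fields `L` and `K`, with `M/L` and `M/K` finite and separable
    (L K : IntermediateField k M)
    [FiniteDimensional L M] [FiniteDimensional K M]
    [Algebra.IsSeparable L M] [Algebra.IsSeparable K M]
    -- an algebraically closed extension `Ω` of `k` of transcendence degree 1
    (Ω : Type*) [Field Ω] [Algebra k Ω] [IsAlgClosed Ω]
    (htrΩ : HasTrdegOne k Ω)
    -- a fixed `k`-algebra embedding `PQ : M → Ω`
    (PQ : M →ₐ[k] Ω) :
    ∃ hE : ∀ e : M →ₐ[k] Ω, InGenericComponent L K PQ e →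
        ∀ x : M, e x ∈ componentField L K PQ,
      -- post-composition by `σ ∈ A^{PQ}` maps edges of `G_gen` to edges of `G_gen`
      (∀ σ ∈ APQ L K PQ, ∀ (e : M →ₐ[k] Ω) (he : InGenericComponent L K PQ e),
        ∃ e' : M →ₐ[k] Ω, InGenericComponent L K PQ e' ∧
          ∀ x : M, (σ ⟨e x, hE e he x⟩ : Ω) = e' x) ∧
      -- `A^{PQ}` acts transitively on the edges of `G_gen`
      (∀ (e e' : M →ₐ[k] Ω) (he : InGenericComponent L K PQ e),
        InGenericComponent L K PQ e' →
        ∃ σ ∈ APQ L K PQ, ∀ x : M, (σ ⟨e x, hE e he x⟩ : Ω) = e' x) :=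
  APQ_transitive_on_edges_general k M htr L K Ω htrΩ PQ
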